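/- arXiv:math/0601196 — 3 statements merged into one kernel-verified Lean document; each statement's English description precedes it below -/
import Mathlib

section
/- Let y ∈ ℝ^n be dominant. Then for every x ∈ ℝ^n one has r(x) = y if and only if p_y(x) = y and x ≤ y. -/
/-!
A point `y ∈ C` is the nearest point of `x` iff `⟪x - y, c - y⟫ ≤ 0` for all `c ∈ C`. As `C` is a
convex cone, this splits into `x - y` lying in the polar cone of `C` and `⟪x - y, y⟫ = 0`.
By Abel summation the polar cone of `C` is `{u | S_k(u) ≤ 0 for k < n, S_n(u) = 0}`, so the first
condition is `x ≤ y`. Moving one block of `y` up or down by less than the smallest gap between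
distinct values of `y` stays in `C`, which forces `x - y` to be orthogonal to every block
indicator, i.e. `p_y(x) = y`; conversely, `y` is a combination of its block indicators, so this
orthogonality gives back `⟪x - y, y⟫ = 0`.
-/

/-- The dominant cone `C = {x ∈ ℝⁿ : x₁ ≥ x₂ ≥ ⋯ ≥ xₙ}`. -/
def domCone (n : ℕ) : Set (EuclideanSpace ℝ (Fin n)) :=
  {x | ∀ i j : Fin n, i ≤ j → x j ≤ x i}

/-- `r` is the map sending each point of `ℝⁿ` to the (unique) closest point
of the dominant cone. -/
def IsClosestPointMap (n : ℕ)
    (r : EuclideanSpace ℝ (Fin n) → EuclideanSpace ℝ (Fin n)) : Prop :=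
  ∀ x, r x ∈ domCone n ∧ ∀ c ∈ domCone n, dist x (r x) ≤ dist x c

/-- `S_k(x) = x₁ + ⋯ + x_k`, the sum of the first `k` coordinates. -/
def psum {n : ℕ} (x : Fin n → ℝ) (k : ℕ) : ℝ :=
  ∑ j ∈ Finset.univ.filter (fun j : Fin n => (j : ℕ) < k), x j

/-- The dominance order: `x ≤ y` iff `S_k(x) ≤ S_k(y)` for `k = 1, …, n-1`
and `S_n(x) = S_n(y)`. -/
def dle {n : ℕ} (x y : Fin n → ℝ) : Prop :=
  (∀ k, 1 ≤ k → k < n → psum x k ≤ psum y k) ∧ psum x n = psum y n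

open Classical in
/-- `blockAvg y x i` is the arithmetic mean of the coordinates `x j` over the block
(level set) of `y` containing the index `i`; for dominant `y` this is the
projection `p_M` onto `𝔞_M` of the paper. -/
noncomputable def blockAvg {n : ℕ} (y x : Fin n → ℝ) (i : Fin n) : ℝ :=
  (∑ j ∈ Finset.univ.filter (fun j : Fin n => y j = y i), x j) /
    ((Finset.univ.filter (fun j : Fin n => y j = y i)).card : ℝ)

open Finset
open scoped RealInnerProductSpace Topology

section InnerProductSpace

variable {E : Type*} [NormedAddCommGroup E] [InnerProductSpace ℝ E]

lemma eq_of_inner_sub_nonpos {x z w : E} (hz : ⟪x - z, w - z⟫ ≤ 0)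
    (hw : ⟪x - w, z - w⟫ ≤ 0) : z = w := by
  have h : ⟪z - w, z - w⟫ = ⟪x - w, z - w⟫ + ⟪x - z, w - z⟫ :=
    calc ⟪z - w, z - w⟫ = ⟪(x - w) - (x - z), z - w⟫ := by rw [sub_sub_sub_cancel_left]
      _ = _ := by rw [inner_sub_left, ← neg_sub w z, inner_neg_right, inner_neg_right]; ring
  exact sub_eq_zero.1 (real_inner_self_nonpos.1 (by linarith))

lemma eq_iff_forall_inner_sub_nonpos {K : Set E} (hK : Convex ℝ K) {x z y : E} (hz : z ∈ K)
    (hmin : ∀ c ∈ K, dist x z ≤ dist x c) (hy : y ∈ K) :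
    z = y ↔ ∀ c ∈ K, ⟪x - y, c - y⟫ ≤ 0 := by
  have hzK : ∀ c ∈ K, ⟪x - z, c - z⟫ ≤ 0 := by
    have : Nonempty K := ⟨⟨z, hz⟩⟩
    refine (norm_eq_iInf_iff_real_inner_le_zero hK hz).1 (le_antisymm ?_ ?_)
    · exact le_ciInf fun c => by simpa only [dist_eq_norm] using hmin c c.2
    · exact ciInf_le (f := fun c : K => ‖x - c‖)
        ⟨0, Set.forall_mem_range.2 fun _ => norm_nonneg _⟩ ⟨z, hz⟩
  exact ⟨fun h => h ▸ hzK, fun hyK => eq_of_inner_sub_nonpos (hzK y hy) (hyK z hz)⟩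

lemma forall_inner_sub_nonpos_iff_of_add_mem {K : Set E} (hzero : 0 ∈ K)
    (hadd : ∀ a ∈ K, ∀ b ∈ K, a + b ∈ K) {u y : E} (hy : y ∈ K) :
    (∀ c ∈ K, ⟪u, c - y⟫ ≤ 0) ↔ (∀ c ∈ K, ⟪u, c⟫ ≤ 0) ∧ ⟪u, y⟫ = 0 := by
  constructor
  · intro h
    have h₀ := h 0 hzero
    have h₂ := h (y + y) (hadd y hy y hy)
    rw [zero_sub, inner_neg_right] at h₀
    rw [add_sub_cancel_right] at h₂
    exact ⟨fun c hc => by simpa using h (c + y) (hadd c hc y hy), by linarith⟩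
  · rintro ⟨h, hy⟩ c hc
    rw [inner_sub_right, hy, sub_zero]
    exact h c hc

lemma inner_eq_zero_of_forall_inner_sub_nonpos {K : Set E} {u y z : E}
    (h : ∀ c ∈ K, ⟪u, c - y⟫ ≤ 0) {s : ℝ} (hs : 0 < s) (hplus : y + s • z ∈ K)
    (hminus : y + (-s) • z ∈ K) : ⟪u, z⟫ = 0 := by
  have hp := h _ hplus
  have hm := h _ hminus
  rw [add_sub_cancel_left, inner_smul_right] at hp hm
  nlinarith

end InnerProductSpace

lemma inner_eq_sum_mul {n : ℕ} (u c : EuclideanSpace ℝ (Fin n)) :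
    ⟪u, c⟫ = ∑ i, u i * c i := by
  simp [PiLp.inner_apply, mul_comm]

section DominantCone

variable {n : ℕ}

lemma zero_mem_domCone : (0 : EuclideanSpace ℝ (Fin n)) ∈ domCone n :=
  fun _ _ _ => le_rfl

lemma add_mem_domCone {a b : EuclideanSpace ℝ (Fin n)} (ha : a ∈ domCone n)
    (hb : b ∈ domCone n) : a + b ∈ domCone n :=
  fun i j hij => add_le_add (ha i j hij) (hb i j hij)

lemma convex_domCone : Convex ℝ (domCone n) := by
  intro a ha b hb s t hs ht _ i j hij
  simp only [PiLp.add_apply, PiLp.smul_apply, smul_eq_mul]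
  exact add_le_add (mul_le_mul_of_nonneg_left (ha i j hij) hs)
    (mul_le_mul_of_nonneg_left (hb i j hij) ht)

end DominantCone

section DominanceOrder

variable {n : ℕ}

lemma psum_eq_sum_range (v : Fin n → ℝ) {k : ℕ} (hk : k ≤ n) :
    psum v k = ∑ j ∈ range k, if h : j < n then v ⟨j, h⟩ else 0 := by
  set g : ℕ → ℝ := fun j => if h : j < n then v ⟨j, h⟩ else 0
  calc psum v k = ∑ j : Fin n, if (j : ℕ) < k then g j else 0 := by simp [psum, sum_filter, g]
    _ = ∑ j ∈ range n, if j < k then g j else 0 :=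
      Fin.sum_univ_eq_sum_range (fun j => if j < k then g j else 0) n
    _ = ∑ j ∈ range k, g j := by
      rw [← sum_filter, show (range n).filter (· < k) = range k by ext; simp; omega]

def prefixIndicator (n k : ℕ) : EuclideanSpace ℝ (Fin n) :=
  WithLp.toLp 2 fun j => if (j : ℕ) < k then 1 else 0

lemma prefixIndicator_mem_domCone (k : ℕ) : prefixIndicator n k ∈ domCone n := by
  intro i j hij
  have := Fin.le_def.1 hij
  simp only [prefixIndicator]
  split_ifs <;> first | omega | norm_num

lemma neg_prefixIndicator_self_mem_domCone : -prefixIndicator n n ∈ domCone n := by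
  intro i j _
  simp [prefixIndicator]

lemma inner_prefixIndicator (u : EuclideanSpace ℝ (Fin n)) (k : ℕ) :
    ⟪u, prefixIndicator n k⟫ = psum u k := by
  simp [inner_eq_sum_mul, prefixIndicator, psum, sum_filter]

lemma inner_nonpos_of_psum_nonpos {u c : EuclideanSpace ℝ (Fin n)} (hc : c ∈ domCone n)
    (hu : ∀ k, 1 ≤ k → k < n → psum u k ≤ 0) (hun : psum u n = 0) : ⟪u, c⟫ ≤ 0 := by
  set f : ℕ → ℝ := fun j => if h : j < n then c ⟨j, h⟩ else 0 with hf
  set g : ℕ → ℝ := fun j => if h : j < n then u ⟨j, h⟩ else 0 with hg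
  have hG : ∀ k ≤ n, ∑ j ∈ range k, g j = psum u k := fun k hk => (psum_eq_sum_range u hk).symm
  have hsum : ⟪u, c⟫ = ∑ j ∈ range n, f j • g j := by
    rw [inner_eq_sum_mul, ← Fin.sum_univ_eq_sum_range]
    simp [hf, hg, mul_comm]
  rw [hsum, sum_range_by_parts, hG n le_rfl, hun, smul_zero, zero_sub, neg_nonpos]
  refine sum_nonneg fun k hk => ?_
  rw [mem_range] at hk
  rw [hG (k + 1) (by omega), smul_eq_mul]
  refine mul_nonneg_of_nonpos_of_nonpos ?_ (hu _ (by omega) (by omega))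
  simp only [hf, dif_pos (show k + 1 < n by omega), dif_pos (show k < n by omega)]
  exact sub_nonpos.2 (hc _ _ (Fin.mk_le_mk.2 (by omega)))

lemma forall_inner_nonpos_iff_psum (u : EuclideanSpace ℝ (Fin n)) :
    (∀ c ∈ domCone n, ⟪u, c⟫ ≤ 0) ↔ (∀ k, 1 ≤ k → k < n → psum u k ≤ 0) ∧ psum u n = 0 := by
  refine ⟨fun h => ⟨fun k _ _ => ?_, le_antisymm ?_ ?_⟩,
    fun h c hc => inner_nonpos_of_psum_nonpos hc h.1 h.2⟩
  · simpa [inner_prefixIndicator] using h _ (prefixIndicator_mem_domCone k)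
  · simpa [inner_prefixIndicator] using h _ (prefixIndicator_mem_domCone n)
  · simpa [inner_prefixIndicator] using h _ neg_prefixIndicator_self_mem_domCone

lemma psum_sub (x y : Fin n → ℝ) (k : ℕ) : psum (x - y) k = psum x k - psum y k := by
  simp [psum, sum_sub_distrib]

lemma dle_iff_forall_inner_sub_nonpos (x y : EuclideanSpace ℝ (Fin n)) :
    dle x y ↔ ∀ c ∈ domCone n, ⟪x - y, c⟫ ≤ 0 := by
  rw [forall_inner_nonpos_iff_psum, WithLp.ofLp_sub]
  simp only [dle, psum_sub, sub_nonpos, sub_eq_zero]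

end DominanceOrder

section Blocks

variable {n : ℕ}

noncomputable def blockIndicator (y : EuclideanSpace ℝ (Fin n)) (i : Fin n) :
    EuclideanSpace ℝ (Fin n) :=
  WithLp.toLp 2 fun j => if y j = y i then 1 else 0

lemma inner_blockIndicator (u y : EuclideanSpace ℝ (Fin n)) (i : Fin n) :
    ⟪u, blockIndicator y i⟫ = ∑ j ∈ univ.filter (fun j => y j = y i), u j := by
  simp [inner_eq_sum_mul, blockIndicator, sum_filter]

lemma blockAvg_eq_iff_inner_blockIndicator (x y : EuclideanSpace ℝ (Fin n)) (i : Fin n) :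
    blockAvg y x i = y i ↔ ⟪x - y, blockIndicator y i⟫ = 0 := by
  rw [inner_blockIndicator, blockAvg]
  set B := univ.filter (fun j => y j = y i)
  have hB : (B.card : ℝ) ≠ 0 := Nat.cast_ne_zero.2 (card_ne_zero_of_mem (by simp [B] : i ∈ B))
  have hy : ∑ j ∈ B, y j = B.card * y i := by
    rw [sum_congr rfl fun j hj => (mem_filter.1 hj).2, sum_const, nsmul_eq_mul]
  rw [WithLp.ofLp_sub]
  simp only [Pi.sub_apply, sum_sub_distrib, hy, div_eq_iff hB, sub_eq_zero, mul_comm]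

lemma exists_pos_forall_lt_sub (y : Fin n → ℝ) :
    ∃ s > 0, ∀ j k, y k < y j → s < y j - y k := by
  have h : ∀ᶠ s in 𝓝[>] (0 : ℝ), ∀ j k, y k < y j → s < y j - y k := by
    refine Filter.eventually_all.2 fun j => Filter.eventually_all.2 fun k => ?_
    by_cases hjk : y k < y j
    · exact (eventually_nhdsWithin_of_eventually_nhds
        (eventually_lt_nhds (sub_pos.2 hjk))).mono fun _ hs _ => hs
    · exact Filter.Eventually.of_forall fun _ h => absurd h hjk
  obtain ⟨s, hs, hpos⟩ := (h.and self_mem_nhdsWithin).exists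
  exact ⟨s, hpos, hs⟩

lemma exists_pos_forall_add_smul_blockIndicator_mem {y : EuclideanSpace ℝ (Fin n)}
    (hy : y ∈ domCone n) (i : Fin n) :
    ∃ s : ℝ, 0 < s ∧ ∀ ε : ℝ, |ε| ≤ s → y + ε • blockIndicator y i ∈ domCone n := by
  obtain ⟨s, hs, hgap⟩ := exists_pos_forall_lt_sub y
  refine ⟨s, hs, fun ε hε j k hjk => ?_⟩
  obtain ⟨hε₁, hε₂⟩ := abs_le.1 hε
  have hyjk := hy j k hjk
  simp only [blockIndicator, PiLp.add_apply, PiLp.smul_apply, smul_eq_mul]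
  split_ifs with hk hj hj
  · linarith
  · have := hgap j k (lt_of_le_of_ne hyjk (hk.trans_ne (Ne.symm hj)))
    linarith
  · have := hgap j k (lt_of_le_of_ne hyjk (fun h => hk (h.trans hj)))
    linarith
  · linarith

lemma inner_eq_zero_of_inner_blockIndicator_eq_zero {u y : EuclideanSpace ℝ (Fin n)}
    (h : ∀ i, ⟪u, blockIndicator y i⟫ = 0) : ⟪u, y⟫ = 0 := by
  simp only [inner_blockIndicator] at h
  rw [inner_eq_sum_mul, ← sum_fiberwise_of_maps_to (fun j _ => mem_image_of_mem y (mem_univ j))]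
  refine sum_eq_zero fun v hv => ?_
  obtain ⟨i, -, rfl⟩ := mem_image.1 hv
  rw [sum_congr rfl fun j hj => by rw [(mem_filter.1 hj).2], ← sum_mul, h i, zero_mul]

end Blocks

theorem stmt_1_general (n : ℕ)
    (r : EuclideanSpace ℝ (Fin n) → EuclideanSpace ℝ (Fin n))
    (hr : IsClosestPointMap n r)
    (y : EuclideanSpace ℝ (Fin n)) (hy : y ∈ domCone n)
    (x : EuclideanSpace ℝ (Fin n)) :
    r x = y ↔ ((∀ i, blockAvg y x i = y i) ∧ dle x y) := by
  obtain ⟨hrx, hmin⟩ := hr x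
  have hcone := forall_inner_sub_nonpos_iff_of_add_mem (u := x - y) zero_mem_domCone
    (fun _ ha _ hb => add_mem_domCone ha hb) hy
  simp only [eq_iff_forall_inner_sub_nonpos convex_domCone hrx hmin hy,
    blockAvg_eq_iff_inner_blockIndicator, dle_iff_forall_inner_sub_nonpos]
  constructor
  · intro hvar
    refine ⟨fun i => ?_, (hcone.1 hvar).1⟩
    obtain ⟨s, hs, hmem⟩ := exists_pos_forall_add_smul_blockIndicator_mem hy i
    exact inner_eq_zero_of_forall_inner_sub_nonpos hvar hs (hmem s (abs_of_pos hs).le)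
      (hmem (-s) (by rw [abs_neg, abs_of_pos hs]))
  · rintro ⟨hblock, hpolar⟩
    exact hcone.2 ⟨hpolar, inner_eq_zero_of_inner_blockIndicator_eq_zero hblock⟩

/-- Proposition 1.1(2) for `GL_n`: for dominant `y`, `r x = y` iff `p_y(x) = y`
and `x ≤ y` in the dominance order. -/
theorem stmt_1 (n : ℕ) (hn : 1 ≤ n)
    (r : EuclideanSpace ℝ (Fin n) → EuclideanSpace ℝ (Fin n))
    (hr : IsClosestPointMap n r)
    (y : EuclideanSpace ℝ (Fin n)) (hy : y ∈ domCone n)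
    (x : EuclideanSpace ℝ (Fin n)) :
    r x = y ↔ ((∀ i, blockAvg y x i = y i) ∧ dle x y) :=
  stmt_1_general n r hr y hy x
end

section
/- The image of ℚ^n under r equals ℚ^n ∩ C; in particular, if every coordinate of x ∈ ℝ^n is rational, then every coordinate of r(x) is rational. -/
/-!
At the nearest point `y = r x`, translating a whole level set `{j | y j = a}` by a small amount
stays inside `C`, so first-order optimality gives `∑_{y j = a} (x j - y j) = 0`. Hence every
coordinate of `y` is the average of `x` over its level set, which is rational when `x` is.
Points of `C` are fixed by `r`, which gives the reverse inclusion.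
-/

open Filter Topology Finset

theorem inner_sub_eq_zero_of_isLocalMin {E : Type*} [NormedAddCommGroup E]
    [InnerProductSpace ℝ E] {x y v : E}
    (h : IsLocalMin (fun t : ℝ => ‖x - (y + t • v)‖) 0) : inner ℝ (x - y) v = 0 := by
  have hsq : IsLocalMin (fun t : ℝ => ‖x - (y + t • v)‖ ^ 2) 0 :=
    Eventually.mono h fun _ ht => pow_le_pow_left₀ (norm_nonneg _) ht 2
  have hderiv : HasDerivAt (fun t : ℝ => ‖x - (y + t • v)‖ ^ 2)
      (2 * inner ℝ (x - (y + (0 : ℝ) • v)) (-v)) 0 := by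
    have : HasDerivAt (fun t : ℝ => x - (y + t • v)) (-v) 0 := by
      simpa using ((hasDerivAt_id (0 : ℝ)).smul_const v).const_add y |>.const_sub x
    exact this.norm_sq
  have := hsq.hasDerivAt_eq_zero hderiv
  simpa [inner_neg_right] using this

section DominantCone

variable {n : ℕ}

noncomputable def levelIndicator (y : EuclideanSpace ℝ (Fin n)) (a : ℝ) :
    EuclideanSpace ℝ (Fin n) :=
  WithLp.toLp 2 fun j => if y j = a then 1 else 0

theorem inner_levelIndicator (z y : EuclideanSpace ℝ (Fin n)) (a : ℝ) :
    inner ℝ z (levelIndicator y a) = ∑ j with y j = a, z j := by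
  simp [levelIndicator, PiLp.inner_apply, Finset.sum_filter]

-- Coordinates at different levels are strictly ordered, so a small move cannot swap them.
theorem eventually_add_smul_levelIndicator_mem_domCone {y : EuclideanSpace ℝ (Fin n)}
    (hy : y ∈ domCone n) (a : ℝ) :
    ∀ᶠ t in 𝓝 (0 : ℝ), y + t • levelIndicator y a ∈ domCone n := by
  set e : Fin n → ℝ := fun j => if y j = a then 1 else 0
  have hcoord : ∀ (t : ℝ) j, (y + t • levelIndicator y a) j = y j + t * e j := fun _ _ => rfl
  simp only [domCone, Set.mem_ofPred_eq, hcoord, eventually_all]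
  intro j k hjk
  rcases (hy j k hjk).lt_or_eq with hlt | heq
  · have hcont : ∀ m, Tendsto (fun t : ℝ => y m + t * e m) (𝓝 0) (𝓝 (y m)) := fun m => by
      have : Continuous fun t : ℝ => y m + t * e m := by fun_prop
      simpa using this.tendsto 0
    exact ((hcont k).eventually_lt (hcont j) hlt).mono fun _ => le_of_lt
  · exact Eventually.of_forall fun t => by simp [e, heq]

theorem sum_levelSet_eq_of_isClosest {x y : EuclideanSpace ℝ (Fin n)} (hy : y ∈ domCone n)
    (hmin : ∀ c ∈ domCone n, dist x y ≤ dist x c) (a : ℝ) :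
    ∑ j with y j = a, x j = #{j | y j = a} * a := by
  have hlocal : IsLocalMin (fun t : ℝ => ‖x - (y + t • levelIndicator y a)‖) 0 := by
    filter_upwards [eventually_add_smul_levelIndicator_mem_domCone hy a] with t ht
    simpa [dist_eq_norm] using hmin _ ht
  have h := inner_sub_eq_zero_of_isLocalMin hlocal
  rw [inner_levelIndicator] at h
  simp only [PiLp.sub_apply, sum_sub_distrib, sub_eq_zero] at h
  rw [h, sum_congr rfl fun j hj => (mem_filter.1 hj).2]
  simp

theorem exists_rat_coord_of_isClosest {x y : EuclideanSpace ℝ (Fin n)} (hy : y ∈ domCone n)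
    (hmin : ∀ c ∈ domCone n, dist x y ≤ dist x c) (hx : ∀ i, ∃ q : ℚ, x i = (q : ℝ))
    (i : Fin n) :
    ∃ q : ℚ, y i = (q : ℝ) := by
  choose q hq using hx
  have hcard : (#{j | y j = y i} : ℝ) ≠ 0 := by
    exact_mod_cast (card_pos.2 ⟨i, by simp⟩).ne'
  refine ⟨(∑ j with y j = y i, q j) / #{j | y j = y i}, ?_⟩
  have hsum := sum_levelSet_eq_of_isClosest hy hmin (y i)
  simp only [hq] at hsum
  push_cast
  rw [hsum, mul_div_cancel_left₀ _ hcard]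

theorem IsClosestPointMap.apply_of_mem
    {r : EuclideanSpace ℝ (Fin n) → EuclideanSpace ℝ (Fin n)} (hr : IsClosestPointMap n r)
    {z : EuclideanSpace ℝ (Fin n)} (hz : z ∈ domCone n) : r z = z := by
  have h := (hr z).2 z hz
  rw [dist_self] at h
  exact (dist_le_zero.1 h).symm

end DominantCone

theorem stmt_4_general (n : ℕ)
    (r : EuclideanSpace ℝ (Fin n) → EuclideanSpace ℝ (Fin n))
    (hr : IsClosestPointMap n r) :
    r '' {x : EuclideanSpace ℝ (Fin n) | ∀ i, ∃ q : ℚ, x i = (q : ℝ)} =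
      {x : EuclideanSpace ℝ (Fin n) | ∀ i, ∃ q : ℚ, x i = (q : ℝ)} ∩ domCone n ∧
    (∀ x : EuclideanSpace ℝ (Fin n),
      (∀ i, ∃ q : ℚ, x i = (q : ℝ)) → ∀ i, ∃ q : ℚ, r x i = (q : ℝ)) := by
  have hrat : ∀ x : EuclideanSpace ℝ (Fin n),
      (∀ i, ∃ q : ℚ, x i = (q : ℝ)) → ∀ i, ∃ q : ℚ, r x i = (q : ℝ) :=
    fun x hx => exists_rat_coord_of_isClosest (hr x).1 (hr x).2 hx
  refine ⟨Set.Subset.antisymm ?_ ?_, hrat⟩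
  · rintro _ ⟨x, hx, rfl⟩
    exact ⟨hrat x hx, (hr x).1⟩
  · rintro z ⟨hz, hzC⟩
    exact ⟨z, hz, hr.apply_of_mem hzC⟩

/-- Proposition 1.1(4) for `GL_n`: `r(ℚⁿ) = ℚⁿ ∩ C`; in particular `r` maps points
with rational coordinates to points with rational coordinates. -/
theorem stmt_4 (n : ℕ) (hn : 1 ≤ n)
    (r : EuclideanSpace ℝ (Fin n) → EuclideanSpace ℝ (Fin n))
    (hr : IsClosestPointMap n r) :
    r '' {x : EuclideanSpace ℝ (Fin n) | ∀ i, ∃ q : ℚ, x i = (q : ℝ)} =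
      {x : EuclideanSpace ℝ (Fin n) | ∀ i, ∃ q : ℚ, x i = (q : ℝ)} ∩ domCone n ∧
    (∀ x : EuclideanSpace ℝ (Fin n),
      (∀ i, ∃ q : ℚ, x i = (q : ℝ)) → ∀ i, ∃ q : ℚ, r x i = (q : ℝ)) :=
  stmt_4_general n r hr
end

section
/- Set d_i = val(a_i) ∈ ℚ ∪ {−∞} for 1 ≤ i ≤ n (so d_n ∈ ℚ). Then ν is the unique minimal element of the set of all μ ∈ ℚ^n satisfying: μ_1 ≥ μ_2 ≥ ⋯ ≥ μ_n, d_i ≤ μ_1 + ⋯ + μ_i for i = 1,…,n−1, and d_n = μ_1 + ⋯ + μ_n. That is, ν itself satisfies these three conditions, and every μ ∈ ℚ^n satisfying them has ν ≤ μ, where ν ≤ μ means ν_1 + ⋯ + ν_i ≤ μ_1 + ⋯ + μ_i for i = 1,…,n−1 and ν_1 + ⋯ + ν_n = μ_1 + ⋯ + μ_n. -/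
open Polynomial

/-- `S_k(ν) = ν₁ + ⋯ + ν_k`, the sum of the first `k` coordinates. -/
def psumQ {n : ℕ} (x : Fin n → ℚ) (k : ℕ) : ℚ :=
  ∑ j ∈ Finset.univ.filter (fun j : Fin n => (j : ℕ) < k), x j

/-- The dominance order on ℚⁿ: `ν ≤ μ` iff `S_k(ν) ≤ S_k(μ)` for `k = 1, …, n-1`
and `S_n(ν) = S_n(μ)`. -/
def dleQ {n : ℕ} (x y : Fin n → ℚ) : Prop :=
  (∀ k, 1 ≤ k → k < n → psumQ x k ≤ psumQ y k) ∧ psumQ x n = psumQ y n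

/-! ### Partial sum lemmas -/

lemma psumQ_zero {n : ℕ} (x : Fin n → ℚ) : psumQ x 0 = 0 := by simp [psumQ]

lemma psumQ_succ {n : ℕ} (x : Fin n → ℚ) {k : ℕ} (hk : k < n) :
    psumQ x (k + 1) = psumQ x k + x ⟨k, hk⟩ := by
  unfold psumQ
  have h : Finset.univ.filter (fun j : Fin n => (j : ℕ) < k + 1)
      = insert ⟨k, hk⟩ (Finset.univ.filter (fun j : Fin n => (j : ℕ) < k)) := by
    ext j
    simp only [Finset.mem_filter, Finset.mem_univ, true_and, Finset.mem_insert, Fin.ext_iff]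
    omega
  rw [h, Finset.sum_insert (by simp)]
  ring

lemma psumQ_top {n : ℕ} (x : Fin n → ℚ) {k : ℕ} (hk : n ≤ k) :
    psumQ x k = ∑ j, x j := by
  unfold psumQ
  congr 1
  apply Finset.filter_true_of_mem
  intro j _
  exact lt_of_lt_of_le j.isLt hk

lemma psumQ_fin {n : ℕ} (x : Fin n → ℚ) (k : ℕ) (hk : k ≤ n) :
    psumQ x k = ∑ m : Fin k, x (Fin.castLE hk m) := by
  induction k with
  | zero => simp [psumQ]
  | succ k ih =>
    have hk' : k < n := hk
    rw [psumQ_succ x hk', ih (le_of_lt hk'), Fin.sum_univ_castSucc]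
    congr 1

lemma card_filter_lt {n k : ℕ} (hk : k ≤ n) :
    (Finset.univ.filter fun j : Fin n => (j : ℕ) < k).card = k := by
  have h := psumQ_fin (fun _ => (1 : ℚ)) k hk
  simp only [psumQ, Finset.sum_const, nsmul_eq_mul, mul_one, Finset.card_univ,
    Fintype.card_fin] at h
  exact_mod_cast h

lemma strictMono_val_le {k n : ℕ} (g : Fin k → Fin n) (hg : StrictMono g) (m : Fin k) :
    (m : ℕ) ≤ (g m : ℕ) := by
  obtain ⟨m, hm⟩ := m
  induction m with
  | zero => exact Nat.zero_le _
  | succ i ih =>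
    have hi : i < k := by omega
    have h1 := ih hi
    have h2 : g ⟨i, hi⟩ < g ⟨i + 1, hm⟩ := hg (by simp [Fin.lt_def])
    have h3 := Fin.lt_def.mp h2
    simp only [Fin.val_mk] at h1 ⊢
    omega

lemma sum_image_orderEmb {n k : ℕ} (ν : Fin n → ℚ) (u : Finset (Fin n)) (hcard : u.card = k) :
    ∑ j ∈ u, ν j = ∑ m : Fin k, ν (u.orderEmbOfFin hcard m) := by
  have hu : u = Finset.image (u.orderEmbOfFin hcard) Finset.univ := by
    apply Finset.coe_injective
    rw [Finset.coe_image, Finset.coe_univ, Set.image_univ, Finset.range_orderEmbOfFin]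
  conv_lhs => rw [hu]
  rw [Finset.sum_image (fun a _ b _ h => (u.orderEmbOfFin hcard).injective h)]

/-- Sum of `ν` over any `k`-subset is at most the sum of the `k` largest values. -/
lemma sum_subset_le {n : ℕ} (ν : Fin n → ℚ) (hν : ∀ i j : Fin n, i ≤ j → ν j ≤ ν i)
    (u : Finset (Fin n)) {k : ℕ} (hcard : u.card = k) (hk : k ≤ n) :
    ∑ j ∈ u, ν j ≤ psumQ ν k := by
  rw [psumQ_fin ν k hk, sum_image_orderEmb ν u hcard]
  apply Finset.sum_le_sum
  intro m _
  apply hν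
  have := strictMono_val_le _ (u.orderEmbOfFin hcard).strictMono m
  exact Fin.le_def.mpr (by simpa using this)

/-- Strict version at a "vertex" of the Newton polygon. -/
lemma sum_subset_lt {n : ℕ} (ν : Fin n → ℚ) (hν : ∀ i j : Fin n, i ≤ j → ν j ≤ ν i)
    (u : Finset (Fin n)) {k : ℕ} (hcard : u.card = k) (hk1 : 1 ≤ k) (hkn : k < n)
    (hvert : ν ⟨k, hkn⟩ < ν ⟨k - 1, by omega⟩)
    (hne : u ≠ Finset.univ.filter fun j : Fin n => (j : ℕ) < k) :
    ∑ j ∈ u, ν j < psumQ ν k := by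
  -- there is an element of u with value ≥ k
  have hex : ∃ j ∈ u, k ≤ (j : ℕ) := by
    by_contra h
    push_neg at h
    apply hne
    apply Finset.eq_of_subset_of_card_le
    · intro j hj
      simp only [Finset.mem_filter, Finset.mem_univ, true_and]
      exact h j hj
    · rw [card_filter_lt (le_of_lt hkn), hcard]
  obtain ⟨j₀, hj₀u, hj₀⟩ := hex
  have hmem : j₀ ∈ Set.range (u.orderEmbOfFin hcard) := by
    rw [Finset.range_orderEmbOfFin]; exact hj₀u
  obtain ⟨m₀, hm₀⟩ := hmem
  rw [psumQ_fin ν k (le_of_lt hkn), sum_image_orderEmb ν u hcard]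
  apply Finset.sum_lt_sum
  · intro m _
    apply hν
    have := strictMono_val_le _ (u.orderEmbOfFin hcard).strictMono m
    exact Fin.le_def.mpr (by simpa using this)
  · refine ⟨m₀, Finset.mem_univ _, ?_⟩
    have h1 : ν (u.orderEmbOfFin hcard m₀) ≤ ν ⟨k, hkn⟩ := by
      apply hν
      rw [hm₀]
      exact Fin.le_def.mpr hj₀
    have h2 : ν ⟨k - 1, by omega⟩ ≤ ν (Fin.castLE (le_of_lt hkn) m₀) := by
      apply hν
      apply Fin.le_def.mpr
      simp only [Fin.coe_castLE]
      omega
    calc ν (u.orderEmbOfFin hcard m₀) ≤ ν ⟨k, hkn⟩ := h1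
      _ < ν ⟨k - 1, by omega⟩ := hvert
      _ ≤ ν (Fin.castLE (le_of_lt hkn) m₀) := h2

/-! ### Valuation lemmas -/

section Val

variable {K : Type*} [Field K] (v : K → WithBot ℚ)
  (hv0 : ∀ x : K, v x = ⊥ ↔ x = 0)
  (hvmul : ∀ x y : K, x ≠ 0 → y ≠ 0 → v (x * y) = v x + v y)
  (hvadd : ∀ x y : K, v (x + y) ≤ max (v x) (v y))

include hv0 hvmul in
lemma val_one : v 1 = 0 := by
  have h := hvmul 1 1 one_ne_zero one_ne_zero
  rw [one_mul] at h
  have hne : v 1 ≠ ⊥ := fun hb => one_ne_zero ((hv0 1).mp hb)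
  obtain ⟨q, hq⟩ := WithBot.ne_bot_iff_exists.mp hne
  rw [← hq] at h ⊢
  rw [← WithBot.coe_add, WithBot.coe_inj] at h
  rw [show q = 0 by linarith]
  exact WithBot.coe_zero

include hv0 hvmul in
lemma val_neg (x : K) : v (-x) = v x := by
  rcases eq_or_ne x 0 with rfl | hx
  · rw [neg_zero]
  · have hm1 : v (-1 : K) = 0 := by
      have h := hvmul (-1) (-1) (by norm_num) (by norm_num)
      rw [neg_mul_neg, one_mul, val_one v hv0 hvmul] at h
      have hne : v (-1 : K) ≠ ⊥ := fun hb => by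
        have := (hv0 (-1)).mp hb; norm_num at this
      obtain ⟨q, hq⟩ := WithBot.ne_bot_iff_exists.mp hne
      rw [← hq] at h ⊢
      rw [← WithBot.coe_add] at h
      have hq0 : q + q = 0 := WithBot.coe_eq_zero.mp h.symm
      rw [show q = 0 by linarith]
      exact WithBot.coe_zero
    have := hvmul (-1) x (by norm_num) hx
    rw [neg_one_mul] at this
    rw [this, hm1, zero_add]

include hv0 hvmul in
lemma val_prod {ι : Type*} (A : Finset ι) (g : ι → K) (hg : ∀ i ∈ A, g i ≠ 0) :
    v (∏ i ∈ A, g i) = ∑ i ∈ A, v (g i) := by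
  classical
  induction A using Finset.cons_induction with
  | empty => simp [val_one v hv0 hvmul]
  | cons a A ha ih =>
    rw [Finset.prod_cons, Finset.sum_cons,
      hvmul _ _ (hg a (Finset.mem_cons_self a A))
        (Finset.prod_ne_zero_iff.mpr fun i hi => hg i (Finset.mem_cons_of_mem hi)),
      ih (fun i hi => hg i (Finset.mem_cons_of_mem hi))]

include hv0 hvadd in
lemma val_sum_le {ι : Type*} (A : Finset ι) (g : ι → K) (c : WithBot ℚ)
    (h : ∀ i ∈ A, v (g i) ≤ c) : v (∑ i ∈ A, g i) ≤ c := by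
  classical
  induction A using Finset.cons_induction with
  | empty => simp only [Finset.sum_empty]; rw [show v 0 = ⊥ from (hv0 0).mpr rfl]; exact bot_le
  | cons a A ha ih =>
    rw [Finset.sum_cons]
    refine le_trans (hvadd _ _) (max_le (h a (Finset.mem_cons_self a A))
      (ih fun i hi => h i (Finset.mem_cons_of_mem hi)))

include hv0 hvadd in
lemma val_sum_lt {ι : Type*} (A : Finset ι) (g : ι → K) (d : WithBot ℚ) (hd : ⊥ < d)
    (h : ∀ i ∈ A, v (g i) < d) : v (∑ i ∈ A, g i) < d := by
  classical
  induction A using Finset.cons_induction with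
  | empty => simp only [Finset.sum_empty]; rw [show v 0 = ⊥ from (hv0 0).mpr rfl]; exact hd
  | cons a A ha ih =>
    rw [Finset.sum_cons]
    refine lt_of_le_of_lt (hvadd _ _) (max_lt (h a (Finset.mem_cons_self a A))
      (ih fun i hi => h i (Finset.mem_cons_of_mem hi)))

include hv0 hvmul hvadd in
lemma val_add_eq (a b : K) (hab : v b < v a) : v (a + b) = v a := by
  apply le_antisymm
  · exact le_trans (hvadd a b) (max_le le_rfl (le_of_lt hab))
  · have h := hvadd (a + b) (-b)
    rw [show a + b + -b = a by ring, val_neg v hv0 hvmul] at h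
    rcases le_max_iff.mp h with h' | h'
    · exact h'
    · exact absurd h' (not_le_of_gt hab)

include hv0 hvmul hvadd in
lemma val_sum_eq {ι : Type*} (A : Finset ι) (g : ι → K) (s₀ : ι) (hs₀ : s₀ ∈ A)
    (hbot : v (g s₀) ≠ ⊥)
    (h : ∀ i ∈ A, i ≠ s₀ → v (g i) < v (g s₀)) :
    v (∑ i ∈ A, g i) = v (g s₀) := by
  classical
  rw [← Finset.add_sum_erase A g hs₀]
  apply val_add_eq v hv0 hvmul hvadd
  apply val_sum_lt v hv0 hvadd
  · exact Ne.bot_lt hbot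
  · intro i hi
    exact h i (Finset.mem_of_mem_erase hi) (Finset.ne_of_mem_erase hi)

end Val

lemma coe_sum_withBot {ι : Type*} (A : Finset ι) (g : ι → ℚ) :
    ((∑ i ∈ A, g i : ℚ) : WithBot ℚ) = ∑ i ∈ A, ((g i : ℚ) : WithBot ℚ) := by
  classical
  induction A using Finset.cons_induction with
  | empty => simp
  | cons a A ha ih => rw [Finset.sum_cons, Finset.sum_cons, WithBot.coe_add, ih]

/-! ### Concavity of partial sums of a nonincreasing sequence -/

lemma psumQ_diff_ge {n : ℕ} (μ : Fin n → ℚ) (hμ : ∀ i j : Fin n, i ≤ j → μ j ≤ μ i)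
    {a k : ℕ} (hak : a ≤ k) (hk1 : 1 ≤ k) (hkn : k ≤ n) :
    ((k : ℚ) - a) * μ ⟨k - 1, by omega⟩ ≤ psumQ μ k - psumQ μ a := by
  have key : ∀ m, a ≤ m → m ≤ k →
      ((m : ℚ) - a) * μ ⟨k - 1, by omega⟩ ≤ psumQ μ m - psumQ μ a := by
    intro m ham hmk
    induction m, ham using Nat.le_induction with
    | base => simp
    | succ m ham ih =>
      have hm : m < n := by omega
      have h1 := ih (by omega)
      have h2 : μ ⟨k - 1, by omega⟩ ≤ μ ⟨m, hm⟩ := by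
        apply hμ
        apply Fin.le_def.mpr
        simp only [Fin.val_mk]
        omega
      rw [psumQ_succ μ hm]
      push_cast
      nlinarith
  exact key k hak le_rfl

lemma psumQ_diff_le {n : ℕ} (μ : Fin n → ℚ) (hμ : ∀ i j : Fin n, i ≤ j → μ j ≤ μ i)
    {k b : ℕ} (hkb : k ≤ b) (hbn : b ≤ n) (hkn : k < n) :
    psumQ μ b - psumQ μ k ≤ ((b : ℚ) - k) * μ ⟨k, hkn⟩ := by
  have key : ∀ m, k ≤ m → m ≤ b →
      psumQ μ m - psumQ μ k ≤ ((m : ℚ) - k) * μ ⟨k, hkn⟩ := by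
    intro m hkm hmb
    induction m, hkm using Nat.le_induction with
    | base => simp
    | succ m hkm ih =>
      have hm : m < n := by omega
      have h1 := ih (by omega)
      have h2 : μ ⟨m, hm⟩ ≤ μ ⟨k, hkn⟩ := by
        apply hμ
        apply Fin.le_def.mpr
        simp only [Fin.val_mk]
        omega
      rw [psumQ_succ μ hm]
      push_cast
      nlinarith
  exact key b hkb le_rfl

lemma psumQ_concave {n : ℕ} (μ : Fin n → ℚ) (hμ : ∀ i j : Fin n, i ≤ j → μ j ≤ μ i)
    {a k b : ℕ} (hak : a ≤ k) (hkb : k ≤ b) (hbn : b ≤ n) (hk1 : 1 ≤ k) (hkn : k < n) :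
    ((b : ℚ) - k) * psumQ μ a + ((k : ℚ) - a) * psumQ μ b
      ≤ ((b : ℚ) - a) * psumQ μ k := by
  have h1 := psumQ_diff_ge μ hμ hak hk1 (le_of_lt hkn)
  have h2 := psumQ_diff_le μ hμ hkb hbn hkn
  have h3 : μ ⟨k, hkn⟩ ≤ μ ⟨k - 1, by omega⟩ := by
    apply hμ
    apply Fin.le_def.mpr
    simp only [Fin.val_mk]
    omega
  have hka : (0 : ℚ) ≤ (k : ℚ) - a := by
    have : (a : ℚ) ≤ k := by exact_mod_cast hak
    linarith
  have hbk : (0 : ℚ) ≤ (b : ℚ) - k := by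
    have : (k : ℚ) ≤ b := by exact_mod_cast hkb
    linarith
  nlinarith [mul_le_mul_of_nonneg_left h1 hbk, mul_le_mul_of_nonneg_left h2 hka,
    mul_le_mul_of_nonneg_left h3 (mul_nonneg hka hbk)]

/-! ### The interpolation/dominance lemma -/

lemma dominance {n : ℕ} (ν μ : Fin n → ℚ)
    (hν : ∀ i j : Fin n, i ≤ j → ν j ≤ ν i) (hμ : ∀ i j : Fin n, i ≤ j → μ j ≤ μ i)
    (hvert : ∀ k (h1 : 1 ≤ k) (h2 : k < n),
      ν ⟨k, h2⟩ < ν ⟨k - 1, by omega⟩ → psumQ ν k ≤ psumQ μ k)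
    (hend : psumQ ν n = psumQ μ n) :
    ∀ k, 1 ≤ k → k < n → psumQ ν k ≤ psumQ μ k := by
  classical
  intro k hk1 hkn
  -- endpoint bound, valid for any m that is n or a vertex
  have hgood : ∀ m, 1 ≤ m → m ≤ n →
      (m = n ∨ ∃ h2 : m < n, ν ⟨m, h2⟩ < ν ⟨m - 1, by omega⟩) →
      psumQ ν m ≤ psumQ μ m := by
    intro m hm1 hmn hm
    rcases hm with rfl | ⟨h2, hv⟩
    · exact le_of_eq hend
    · exact hvert m hm1 h2 hv
  by_cases hvk : ν ⟨k, hkn⟩ < ν ⟨k - 1, by omega⟩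
  · exact hvert k hk1 hkn hvk
  -- non-vertex case: interpolate
  push_neg at hvk
  set P : ℕ → Prop := fun m => k < m ∧
    (m = n ∨ ∃ h2 : m < n, ν ⟨m, h2⟩ < ν ⟨m - 1, by omega⟩) with hPdef
  have hPn : P n := ⟨hkn, Or.inl rfl⟩
  have hPex : ∃ m, P m := ⟨n, hPn⟩
  set b := Nat.find hPex with hbdef
  have hPb : P b := Nat.find_spec hPex
  have hbn : b ≤ n := Nat.find_le hPn
  have hkb : k < b := hPb.1
  set Q : ℕ → Prop := fun m => 1 ≤ m ∧ ∃ h2 : m < n, ν ⟨m, h2⟩ < ν ⟨m - 1, by omega⟩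
    with hQdef
  set a := Nat.findGreatest Q (k - 1) with hadef
  have hak : a ≤ k - 1 := Nat.findGreatest_le _
  have hakk : a < k := by omega
  have han : a < n := by omega
  -- ν has no vertex strictly between a and b
  have hconst : ∀ m (hm : m < n), a < m → m < b → ν ⟨m, hm⟩ = ν ⟨m - 1, by omega⟩ := by
    intro m hm ham hmb
    have h1m : 1 ≤ m := by omega
    by_contra hne
    have hlt : ν ⟨m, hm⟩ < ν ⟨m - 1, by omega⟩ :=
      lt_of_le_of_ne (hν ⟨m - 1, by omega⟩ ⟨m, hm⟩ (Fin.mk_le_mk.mpr (by omega))) hne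
    rcases lt_trichotomy m k with h | h | h
    · exact Nat.findGreatest_is_greatest (by omega : a < m) (by omega) ⟨h1m, hm, hlt⟩
    · subst h
      exact absurd hlt (not_lt_of_ge hvk)
    · exact Nat.find_min hPex hmb ⟨h, Or.inr ⟨hm, hlt⟩⟩
  -- ν is constant on [a, b)
  have hstep : ∀ m, a ≤ m → ∀ (hm : m < n), m < b → ν ⟨m, hm⟩ = ν ⟨a, han⟩ := by
    intro m ham
    induction m, ham using Nat.le_induction with
    | base => intro _ _; rfl
    | succ m ham ih =>
      intro hm hmb
      rw [hconst (m + 1) hm (by omega) hmb]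
      have he : (⟨m + 1 - 1, by omega⟩ : Fin n) = ⟨m, by omega⟩ := by
        apply Fin.ext; simp
      rw [he]
      exact ih (by omega) (by omega)
  -- psumQ ν is linear on [a, b]
  have hlin : ∀ m, a ≤ m → m ≤ b →
      psumQ ν m = psumQ ν a + ((m : ℚ) - a) * ν ⟨a, han⟩ := by
    intro m ham
    induction m, ham using Nat.le_induction with
    | base => intro _; simp
    | succ m ham ih =>
      intro hmb
      have hm : m < n := by omega
      rw [psumQ_succ ν hm, ih (by omega), hstep m ham hm (by omega)]
      push_cast
      ring
  -- endpoints are below μ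
  have hsa : psumQ ν a ≤ psumQ μ a := by
    rcases Nat.eq_zero_or_pos a with ha0 | ha
    · rw [ha0, psumQ_zero, psumQ_zero]
    · have hQ : Q a := Nat.findGreatest_of_ne_zero hadef.symm (by omega)
      obtain ⟨ha1, h2, hv⟩ := hQ
      exact hvert a ha1 h2 hv
  have hsb : psumQ ν b ≤ psumQ μ b := by
    rcases hPb.2 with hb | ⟨h2, hv⟩
    · rw [hb]; exact le_of_eq hend
    · exact hvert b (by omega) h2 hv
  -- concavity of psumQ μ
  have hc := psumQ_concave μ hμ (le_of_lt hakk) (le_of_lt hkb) hbn hk1 hkn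
  have hlk := hlin k (le_of_lt hakk) (le_of_lt hkb)
  have hlb := hlin b (by omega) le_rfl
  have hkey : ((b : ℚ) - a) * psumQ ν k
      = ((b : ℚ) - k) * psumQ ν a + ((k : ℚ) - a) * psumQ ν b := by
    rw [hlk, hlb]; ring
  have hba : (0 : ℚ) < (b : ℚ) - a := by
    have h1 : (a : ℚ) < b := by exact_mod_cast (by omega : a < b)
    linarith
  have hbk : (0 : ℚ) ≤ (b : ℚ) - k := by
    have h1 : (k : ℚ) ≤ b := by exact_mod_cast le_of_lt hkb
    linarith
  have hka : (0 : ℚ) ≤ (k : ℚ) - a := by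
    have h1 : (a : ℚ) ≤ k := by exact_mod_cast le_of_lt hakk
    linarith
  have hfin : ((b : ℚ) - a) * psumQ ν k ≤ ((b : ℚ) - a) * psumQ μ k := by
    calc ((b : ℚ) - a) * psumQ ν k
        = ((b : ℚ) - k) * psumQ ν a + ((k : ℚ) - a) * psumQ ν b := hkey
      _ ≤ ((b : ℚ) - k) * psumQ μ a + ((k : ℚ) - a) * psumQ μ b :=
          add_le_add (mul_le_mul_of_nonneg_left hsa hbk) (mul_le_mul_of_nonneg_left hsb hka)
      _ ≤ ((b : ℚ) - a) * psumQ μ k := hc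
  exact le_of_mul_le_mul_left hfin hba

/-- Theorem 1.3 for `GL_n`: with `d_i = val(a_i)` (where `a_i = f.coeff (n - i)`),
the slope vector `ν` of the Newton polygon is the unique minimal element of the set of
nonincreasing `μ ∈ ℚⁿ` with `d_i ≤ μ₁ + ⋯ + μ_i` for `i = 1, …, n-1` and
`d_n = μ₁ + ⋯ + μ_n`. -/
theorem stmt_11 {K : Type*} [Field K] [IsAlgClosed K]
    (v : K → WithBot ℚ)
    (hv0 : ∀ x : K, v x = ⊥ ↔ x = 0)
    (hvmul : ∀ x y : K, x ≠ 0 → y ≠ 0 → v (x * y) = v x + v y)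
    (hvadd : ∀ x y : K, v (x + y) ≤ max (v x) (v y))
    (n : ℕ) (hn : 1 ≤ n)
    (f : Polynomial K) (t : Fin n → K) (ht : ∀ j, t j ≠ 0)
    (hfact : f = ∏ j : Fin n, (X - C (t j)))
    (ν : Fin n → ℚ) (hν : ∀ i j : Fin n, i ≤ j → ν j ≤ ν i)
    (σ : Equiv.Perm (Fin n)) (hσ : ∀ j, v (t j) = ((ν (σ j) : ℚ) : WithBot ℚ)) :
    ((∀ i, 1 ≤ i → i < n → v (f.coeff (n - i)) ≤ ((psumQ ν i : ℚ) : WithBot ℚ)) ∧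
      v (f.coeff 0) = ((psumQ ν n : ℚ) : WithBot ℚ)) ∧
    (∀ μ : Fin n → ℚ, (∀ i j : Fin n, i ≤ j → μ j ≤ μ i) →
      (∀ i, 1 ≤ i → i < n → v (f.coeff (n - i)) ≤ ((psumQ μ i : ℚ) : WithBot ℚ)) →
      v (f.coeff 0) = ((psumQ μ n : ℚ) : WithBot ℚ) →
      dleQ ν μ) := by
  classical
  -- Vieta: coefficient formula
  have hcoeff : ∀ k : ℕ, k ≤ n →
      f.coeff (n - k) = (-1) ^ k * ∑ s ∈ Finset.univ.powersetCard k, ∏ j ∈ s, t j := by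
    intro k hk
    have h1 : f = (((Finset.univ : Finset (Fin n)).val.map t).map fun x => X - C x).prod := by
      rw [hfact, Multiset.map_map]
      rfl
    have hcd : Multiset.card ((Finset.univ : Finset (Fin n)).val.map t) = n := by
      simp
    have h2 := Multiset.prod_X_sub_C_coeff ((Finset.univ : Finset (Fin n)).val.map t)
      (k := n - k) (by rw [hcd]; omega)
    rw [← h1, hcd] at h2
    rw [h2, show n - (n - k) = k by omega, Finset.esymm_map_val]
  -- valuation of a single product term
  have hterm : ∀ s : Finset (Fin n),
      v (∏ j ∈ s, t j) = ((∑ j ∈ s, ν (σ j) : ℚ) : WithBot ℚ) := by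
    intro s
    rw [val_prod v hv0 hvmul s t fun j _ => ht j, coe_sum_withBot]
    exact Finset.sum_congr rfl fun j _ => hσ j
  have himg : ∀ s : Finset (Fin n), ∑ j ∈ s, ν (σ j) = ∑ j ∈ s.image σ, ν j := by
    intro s
    rw [Finset.sum_image fun a _ b _ h => σ.injective h]
  have hvpow : ∀ (k : ℕ) (x : K), v ((-1) ^ k * x) = v x := by
    intro k x
    rcases Nat.even_or_odd k with hk | hk
    · rw [hk.neg_one_pow, one_mul]
    · rw [hk.neg_one_pow, neg_one_mul, val_neg v hv0 hvmul]
  -- upper bound for all coefficients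
  have hub : ∀ k : ℕ, k ≤ n →
      v (f.coeff (n - k)) ≤ ((psumQ ν k : ℚ) : WithBot ℚ) := by
    intro k hk
    rw [hcoeff k hk, hvpow]
    apply val_sum_le v hv0 hvadd
    intro s hs
    rw [hterm s]
    rw [WithBot.coe_le_coe, himg s]
    obtain ⟨_, hscard⟩ := Finset.mem_powersetCard.mp hs
    exact sum_subset_le ν hν (s.image σ)
      (by rw [Finset.card_image_of_injective _ σ.injective, hscard]) hk
  -- exact value of the constant coefficient
  have hvn : v (f.coeff 0) = ((psumQ ν n : ℚ) : WithBot ℚ) := by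
    rw [show (0 : ℕ) = n - n by omega, hcoeff n le_rfl, hvpow]
    have hcard : (Finset.univ : Finset (Fin n)).card = n := by simp
    have hps : (Finset.univ : Finset (Fin n)).powersetCard n = {Finset.univ} := by
      ext s
      simp only [Finset.mem_powersetCard, Finset.mem_singleton, Finset.subset_univ, true_and]
      constructor
      · intro hc
        exact Finset.eq_of_subset_of_card_le (Finset.subset_univ s) (by rw [hcard, hc])
      · rintro rfl
        exact hcard
    rw [hps]
    rw [Finset.sum_singleton, hterm]
    rw [WithBot.coe_inj, psumQ_top ν le_rfl]
    exact Equiv.sum_comp σ ν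
  -- exact value at vertices
  have hvx : ∀ k (hk1 : 1 ≤ k) (hkn : k < n),
      ν ⟨k, hkn⟩ < ν ⟨k - 1, by omega⟩ →
      v (f.coeff (n - k)) = ((psumQ ν k : ℚ) : WithBot ℚ) := by
    intro k hk1 hkn hv'
    rw [hcoeff k (le_of_lt hkn), hvpow]
    set u₀ : Finset (Fin n) := Finset.univ.filter fun j : Fin n => (j : ℕ) < k with hu₀
    set s₀ : Finset (Fin n) := u₀.image σ.symm with hs₀
    have hs₀img : s₀.image σ = u₀ := by
      rw [hs₀, Finset.image_image]
      have : (σ : Fin n → Fin n) ∘ (σ.symm : Fin n → Fin n) = id := by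
        funext x; simp
      rw [this, Finset.image_id]
    have hs₀card : s₀.card = k := by
      rw [hs₀, Finset.card_image_of_injective _ σ.symm.injective, hu₀,
        card_filter_lt (le_of_lt hkn)]
    have hs₀mem : s₀ ∈ Finset.univ.powersetCard k :=
      Finset.mem_powersetCard.mpr ⟨Finset.subset_univ _, hs₀card⟩
    have hval₀ : v (∏ j ∈ s₀, t j) = ((psumQ ν k : ℚ) : WithBot ℚ) := by
      rw [hterm, himg, hs₀img]
      rfl
    rw [val_sum_eq v hv0 hvmul hvadd _ _ s₀ hs₀mem
      (by rw [hval₀]; exact WithBot.coe_ne_bot) ?_, hval₀]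
    intro s hs hne
    rw [hterm s, hval₀, WithBot.coe_lt_coe, himg s]
    obtain ⟨_, hscard⟩ := Finset.mem_powersetCard.mp hs
    apply sum_subset_lt ν hν (s.image σ)
      (by rw [Finset.card_image_of_injective _ σ.injective, hscard]) hk1 hkn hv'
    intro hcontra
    apply hne
    have : (s.image σ).image σ.symm = u₀.image σ.symm := by rw [hcontra, hu₀]
    rw [Finset.image_image] at this
    have hid : (σ.symm : Fin n → Fin n) ∘ (σ : Fin n → Fin n) = id := by
      funext x; simp
    rw [hid, Finset.image_id] at this
    rw [this, hs₀]
  refine ⟨⟨fun i hi1 hin => hub i (le_of_lt hin), hvn⟩, ?_⟩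
  intro μ hμ hμle hμn
  have hendQ : psumQ ν n = psumQ μ n := by
    have h := hvn.symm.trans hμn
    exact_mod_cast h
  refine ⟨?_, hendQ⟩
  apply dominance ν μ hν hμ ?_ hendQ
  intro k h1 h2 hv'
  have h := hvx k h1 h2 hv'
  have h' := hμle k h1 h2
  rw [h] at h'
  exact_mod_cast h'
end
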